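/- Let A be a symmetrically contractible Banach algebra with symmetric diagonal M = Σ aₙ⊗bₙ (i.e., the flip of M equals M). Then the map τ: A → Z(A), τ(c) = Σ aₙ c bₙ, is a bounded Z(A)-valued trace: τ(cc') = τ(c'c) for all c, c' ∈ A, and τ(1) = 1. -/

import Mathlib

/-! Bounded functionals separate points, so the identities that a symmetric diagonal satisfies
against scalar bilinear functionals lift to bounded bilinear maps `ψ : A × A → A`. For
`ψ x y = x c y` the module identity `Σ ψ (z aₙ) bₙ = Σ ψ aₙ (bₙ z)` says that `τ c` commutes
with `z`, and the trace property is the chain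
`Σ aₙ cc' bₙ = Σ bₙ cc' aₙ = Σ bₙ c'c aₙ = Σ aₙ c'c bₙ`: flip, the module identity for
`ψ x y = y c x` and `z = c'`, flip again. -/

/-- A Banach `A`-bimodule structure on a normed space `E`. -/
structure BanachBimodule (A E : Type) [NonUnitalNormedRing A] [NormedSpace ℂ A]
    [NormedAddCommGroup E] [NormedSpace ℂ E] where
  l : A →L[ℂ] E →L[ℂ] E
  r : A →L[ℂ] E →L[ℂ] E
  l_mul : ∀ a b x, l (a * b) x = l a (l b x)
  r_mul : ∀ a b x, r (a * b) x = r b (r a x)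
  lr_comm : ∀ a b x, l a (r b x) = r b (l a x)

/-- A Banach algebra `A` is contractible if every bounded derivation from `A`
into any Banach `A`-bimodule is inner. -/
def Contractible (A : Type) [NonUnitalNormedRing A] [NormedSpace ℂ A] : Prop :=
  ∀ (E : Type) [NormedAddCommGroup E] [NormedSpace ℂ E] [CompleteSpace E],
    ∀ (B : BanachBimodule A E) (D : A →L[ℂ] E),
      (∀ a b, D (a * b) = B.l a (D b) + B.r b (D a)) →
      ∃ v : E, ∀ a, D a = B.l a v - B.r a v

/-- The families `a b : ι → A` represent a diagonal `M = Σ aₙ ⊗ bₙ` of the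
unital Banach algebra `A` in the completed projective tensor product `A ⊗^γ A`:
the representing series is absolutely convergent, `Δ(M) = 1`, and
`(c ⊗ 1) M = M (1 ⊗ c)` for all `c` (the latter equality in `A ⊗^γ A` being
tested against all bounded bilinear functionals, which separate the points
of `A ⊗^γ A`). -/
def IsDiagonal {A : Type} [NormedRing A] [NormedAlgebra ℂ A] {ι : Type}
    (a b : ι → A) : Prop :=
  Summable (fun n => ‖a n‖ * ‖b n‖) ∧
  (∑' n, a n * b n) = 1 ∧
  ∀ (φ : A →L[ℂ] A →L[ℂ] ℂ) (c : A),
    (∑' n, φ (c * a n) (b n)) = ∑' n, φ (a n) (b n * c)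

open ContinuousLinearMap

theorem tsum_eq_tsum_of_forall_dual (R : Type*) {V ι : Type*} [Ring R] [TopologicalSpace R]
    [T2Space R] [AddCommGroup V] [TopologicalSpace V] [Module R V] [SeparatingDual R V]
    {u v : ι → V} (hu : Summable u) (hv : Summable v)
    (h : ∀ f : StrongDual R V, ∑' n, f (u n) = ∑' n, f (v n)) :
    ∑' n, u n = ∑' n, v n :=
  (SeparatingDual.eq_iff_forall_dual_eq (R := R)).mpr fun f => by
    rw [f.map_tsum hu, f.map_tsum hv, h]

theorem summable_apply_apply_of_summable_norm_mul {𝕜 ι X Y E : Type*}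
    [NontriviallyNormedField 𝕜] [SeminormedAddCommGroup X] [NormedSpace 𝕜 X]
    [SeminormedAddCommGroup Y] [NormedSpace 𝕜 Y] [NormedAddCommGroup E] [NormedSpace 𝕜 E]
    [CompleteSpace E] {x : ι → X} {y : ι → Y} (hxy : Summable fun n => ‖x n‖ * ‖y n‖)
    (ψ : X →L[𝕜] Y →L[𝕜] E) : Summable fun n => ψ (x n) (y n) :=
  Summable.of_norm_bounded (hxy.mul_left ‖ψ‖) fun n => by
    simpa only [mul_assoc] using ψ.le_opNorm₂ (x n) (y n)

section Sandwich

variable (𝕜 : Type*) {A : Type*} [NontriviallyNormedField 𝕜] [NonUnitalSeminormedRing A]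
  [NormedSpace 𝕜 A] [IsScalarTower 𝕜 A A] [SMulCommClass 𝕜 A A]

noncomputable def sandwich (c : A) : A →L[𝕜] A →L[𝕜] A := (mul 𝕜 A).comp ((mul 𝕜 A).flip c)

@[simp]
theorem sandwich_apply (c x y : A) : sandwich 𝕜 c x y = x * c * y := by
  simp [sandwich]

end Sandwich

noncomputable def diagonalTrace {A : Type*} [NormedRing A] [NormedAlgebra ℂ A] {ι : Type*}
    (a b : ι → A) : A →L[ℂ] A :=
  ∑' n, mulLeftRight ℂ A (a n) (b n)

namespace IsDiagonal

variable {A : Type} [NormedRing A] [NormedAlgebra ℂ A] {ι : Type} {a b : ι → A}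

section Lift

variable {E : Type*} [NormedAddCommGroup E] [NormedSpace ℂ E] [CompleteSpace E]

theorem summable_apply_apply (hd : IsDiagonal a b) (ψ : A →L[ℂ] A →L[ℂ] E) :
    Summable fun n => ψ (a n) (b n) :=
  summable_apply_apply_of_summable_norm_mul hd.1 ψ

theorem tsum_apply_mul_left_eq (hd : IsDiagonal a b) (ψ : A →L[ℂ] A →L[ℂ] E) (c : A) :
    ∑' n, ψ (c * a n) (b n) = ∑' n, ψ (a n) (b n * c) := by
  refine tsum_eq_tsum_of_forall_dual ℂ
    (by simpa using hd.summable_apply_apply (ψ.bilinearComp (mul ℂ A c) (.id ℂ A)))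
    (by simpa using hd.summable_apply_apply (ψ.bilinearComp (.id ℂ A) ((mul ℂ A).flip c)))
    fun f => ?_
  simpa using hd.2.2 ((compL ℂ A E ℂ f).comp ψ) c

theorem tsum_apply_swap_eq (hd : IsDiagonal a b)
    (hsymm : ∀ φ : A →L[ℂ] A →L[ℂ] ℂ, ∑' n, φ (a n) (b n) = ∑' n, φ (b n) (a n))
    (ψ : A →L[ℂ] A →L[ℂ] E) : ∑' n, ψ (a n) (b n) = ∑' n, ψ (b n) (a n) :=
  tsum_eq_tsum_of_forall_dual ℂ (hd.summable_apply_apply ψ) (hd.summable_apply_apply ψ.flip)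
    fun f => hsymm ((compL ℂ A E ℂ f).comp ψ)

end Lift

variable [CompleteSpace A]

theorem diagonalTrace_apply (hd : IsDiagonal a b) (c : A) :
    diagonalTrace a b c = ∑' n, a n * c * b n := by
  rw [diagonalTrace, ← apply_apply (v := c),
    (apply ℂ A c).map_tsum (hd.summable_apply_apply (mulLeftRight ℂ A))]
  simp

theorem diagonalTrace_one (hd : IsDiagonal a b) : diagonalTrace a b 1 = 1 := by
  simpa [hd.diagonalTrace_apply] using hd.2.1

theorem diagonalTrace_apply_mul_comm (hd : IsDiagonal a b) (c z : A) :
    diagonalTrace a b c * z = z * diagonalTrace a b c := by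
  have hsum : Summable fun n => a n * c * b n := by
    simpa using hd.summable_apply_apply (sandwich ℂ c)
  calc diagonalTrace a b c * z = ∑' n, sandwich ℂ c (a n) (b n * z) := by
        rw [hd.diagonalTrace_apply, ← hsum.tsum_mul_right]
        simp [mul_assoc]
    _ = ∑' n, sandwich ℂ c (z * a n) (b n) := (hd.tsum_apply_mul_left_eq _ z).symm
    _ = z * diagonalTrace a b c := by
        rw [hd.diagonalTrace_apply, ← hsum.tsum_mul_left]
        simp [mul_assoc]

theorem diagonalTrace_mul_comm (hd : IsDiagonal a b)
    (hsymm : ∀ φ : A →L[ℂ] A →L[ℂ] ℂ, ∑' n, φ (a n) (b n) = ∑' n, φ (b n) (a n)) (c c' : A) :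
    diagonalTrace a b (c * c') = diagonalTrace a b (c' * c) :=
  calc diagonalTrace a b (c * c') = ∑' n, sandwich ℂ (c * c') (a n) (b n) := by
        simp [hd.diagonalTrace_apply]
    _ = ∑' n, sandwich ℂ (c * c') (b n) (a n) := hd.tsum_apply_swap_eq hsymm _
    _ = ∑' n, (sandwich ℂ c).flip (c' * a n) (b n) := by simp [mul_assoc]
    _ = ∑' n, (sandwich ℂ c).flip (a n) (b n * c') := hd.tsum_apply_mul_left_eq _ c'
    _ = ∑' n, sandwich ℂ (c' * c) (b n) (a n) := by simp [mul_assoc]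
    _ = ∑' n, sandwich ℂ (c' * c) (a n) (b n) := (hd.tsum_apply_swap_eq hsymm _).symm
    _ = diagonalTrace a b (c' * c) := by simp [hd.diagonalTrace_apply]

end IsDiagonal

theorem symmetric_diagonal_trace_general
    (A : Type) [NormedRing A] [NormedAlgebra ℂ A] [CompleteSpace A]
    (a b : ℕ → A) (hdiag : IsDiagonal a b)
    (hsymm : ∀ φ : A →L[ℂ] A →L[ℂ] ℂ,
      (∑' n, φ (a n) (b n)) = ∑' n, φ (b n) (a n)) :
    ∃ τ : A →L[ℂ] A,
      (∀ c, τ c = ∑' n, a n * c * b n) ∧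
      (∀ c z, τ c * z = z * τ c) ∧
      τ 1 = 1 ∧
      ∀ c c', τ (c * c') = τ (c' * c) :=
  ⟨diagonalTrace a b, hdiag.diagonalTrace_apply, hdiag.diagonalTrace_apply_mul_comm,
    hdiag.diagonalTrace_one, hdiag.diagonalTrace_mul_comm hsymm⟩

/-- a symmetric diagonal `M = Σ aₙ ⊗ bₙ` (i.e. the flip of `M`
equals `M`, tested against all bounded bilinear functionals) of a symmetrically
contractible Banach algebra gives rise to a bounded `Z(A)`-valued normalized
trace `τ(c) = Σ aₙ c bₙ`. -/
theorem symmetric_diagonal_trace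
    (A : Type) [NormedRing A] [NormedAlgebra ℂ A] [CompleteSpace A]
    (hA : Contractible A) (a b : ℕ → A) (hdiag : IsDiagonal a b)
    (hsymm : ∀ φ : A →L[ℂ] A →L[ℂ] ℂ,
      (∑' n, φ (a n) (b n)) = ∑' n, φ (b n) (a n)) :
    ∃ τ : A →L[ℂ] A,
      (∀ c, τ c = ∑' n, a n * c * b n) ∧
      (∀ c z, τ c * z = z * τ c) ∧
      τ 1 = 1 ∧
      ∀ c c', τ (c * c') = τ (c' * c) :=
  symmetric_diagonal_trace_general A a b hdiag hsymm
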